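/- ∑_{k=1}^∞ 4^k / (k^2 · C(2k,k)) = 3ζ(2). -/

import Mathlib

open Real

/-- Riemann zeta value at a positive integer `m > 1`, as the series `∑ 1/n^m`. -/
noncomputable def zetaVal (m : ℕ) : ℝ := ∑' n : ℕ, 1 / (n + 1 : ℝ) ^ m

/-- Polylogarithm `Li_m(z) = ∑_{k≥1} z^k / k^m`. -/
noncomputable def polyLog (m : ℕ) (z : ℝ) : ℝ := ∑' k : ℕ, z ^ (k + 1) / (k + 1 : ℝ) ^ m

/-- Generalized harmonic number `H_k^{(m)} = ∑_{n=1}^k 1/n^m`. -/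
noncomputable def genHarmonic (k m : ℕ) : ℝ := ∑ n ∈ Finset.range k, 1 / (n + 1 : ℝ) ^ m

open MeasureTheory

/- ## Closed forms with factorials -/

noncomputable def CF (k m : ℕ) : ℝ :=
  2 * 4^k * (Nat.factorial (2*m)) * (Nat.factorial k) * (Nat.factorial (m+k+1)) /
    ((Nat.factorial m) * (Nat.factorial (2*m+2*k+2)))

lemma CF_zero (m : ℕ) : CF 0 m = 1 / (2*(m:ℝ)+1) := by
  have e1 : 2*m+2*0+2 = ((2*m+1)+1) := by ring
  have e2 : m+0+1 = m+1 := by ring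
  rw [CF, e1, e2, Nat.factorial_succ (2*m+1), Nat.factorial_succ (2*m), Nat.factorial_succ m]
  push_cast
  have hm : (Nat.factorial m : ℝ) ≠ 0 := by positivity
  have hm2 : (Nat.factorial (2*m) : ℝ) ≠ 0 := by positivity
  have hp : (2*(m:ℝ)+1) ≠ 0 := by positivity
  have hq : (2*(m:ℝ)+1+1) ≠ 0 := by positivity
  have hr : ((m:ℝ)+1) ≠ 0 := by positivity
  field_simp
  ring

lemma CF_step (k m : ℕ) : CF k m - CF k (m+1) = CF (k+1) m := by
  have e3 : 2*(m+1)+2*k+2 = ((2*m+2*k+2)+1)+1 := by ring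
  have e4 : 2*m+2*(k+1)+2 = ((2*m+2*k+2)+1)+1 := by ring
  have e1 : 2*(m+1) = ((2*m)+1)+1 := by ring
  have e2 : (m+1)+k+1 = (m+k+1)+1 := by ring
  have e5 : m+(k+1)+1 = (m+k+1)+1 := by ring
  rw [CF, CF, CF, e3, e4, e1, e2, e5, Nat.factorial_succ ((2*m)+1), Nat.factorial_succ (2*m),
    Nat.factorial_succ (m+k+1), Nat.factorial_succ ((2*m+2*k+2)+1), Nat.factorial_succ (2*m+2*k+2),
    Nat.factorial_succ m, Nat.factorial_succ k]
  push_cast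
  have hm : (Nat.factorial m : ℝ) ≠ 0 := by positivity
  have hm2 : (Nat.factorial (2*m) : ℝ) ≠ 0 := by positivity
  have hk : (Nat.factorial k : ℝ) ≠ 0 := by positivity
  have hmk : (Nat.factorial (m+k+1) : ℝ) ≠ 0 := by positivity
  have hb : (Nat.factorial (2*m+2*k+2) : ℝ) ≠ 0 := by positivity
  have h1 : ((m:ℝ)+1) ≠ 0 := by positivity
  have h2 : (2*(m:ℝ)+2*k+2+1) ≠ 0 := by positivity
  have h3 : (2*(m:ℝ)+2*k+2+1+1) ≠ 0 := by positivity
  field_simp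
  ring

/- ## The integral `G k m = ∫ x^{2m} (1-x²)^k` -/

noncomputable def G (k m : ℕ) : ℝ := ∫ x in (0:ℝ)..1, x ^ (2*m) * (1 - x^2) ^ k

lemma G_zero (m : ℕ) : G 0 m = 1 / (2*(m:ℝ)+1) := by
  simp [G, integral_pow]

lemma G_succ (k m : ℕ) : G (k+1) m = G k m - G k (m+1) := by
  have h1 : ∀ x : ℝ, x ^ (2*m) * (1 - x^2)^(k+1)
      = x ^ (2*m) * (1-x^2)^k - x ^ (2*(m+1)) * (1-x^2)^k := by
    intro x; ring
  have c1 : IntervalIntegrable (fun x : ℝ => x ^ (2*m) * (1-x^2)^k) volume 0 1 := by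
    apply Continuous.intervalIntegrable; continuity
  have c2 : IntervalIntegrable (fun x : ℝ => x ^ (2*(m+1)) * (1-x^2)^k) volume 0 1 := by
    apply Continuous.intervalIntegrable; continuity
  simp only [G]
  rw [intervalIntegral.integral_congr
    (g := fun x : ℝ => x ^ (2*m) * (1-x^2)^k - x ^ (2*(m+1)) * (1-x^2)^k) (fun x _ => h1 x)]
  exact intervalIntegral.integral_sub c1 c2

lemma G_eq (k m : ℕ) : G k m = CF k m := by
  induction k generalizing m with
  | zero => rw [G_zero, CF_zero]
  | succ k ih => rw [G_succ, ih, ih, CF_step]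

/- ## The beta integral `PI a b = ∫ x^a (1-x)^b` -/

noncomputable def PI (a b : ℕ) : ℝ := ∫ x in (0:ℝ)..1, x ^ a * (1 - x) ^ b

noncomputable def PF (a b : ℕ) : ℝ :=
  (Nat.factorial a) * (Nat.factorial b) / (Nat.factorial (a+b+1))

lemma PI_zero (a : ℕ) : PI a 0 = PF a 0 := by
  simp only [PI, PF, pow_zero, mul_one, integral_pow, Nat.factorial_succ, Nat.factorial_zero]
  push_cast
  have h1 : (Nat.factorial a : ℝ) ≠ 0 := by positivity
  have h4 : ((a:ℝ)+1) ≠ 0 := by positivity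
  rw [one_pow, zero_pow (by omega), sub_zero]
  field_simp

lemma PI_succ (a b : ℕ) : PI a (b+1) = PI a b - PI (a+1) b := by
  have h1 : ∀ x : ℝ, x ^ a * (1-x)^(b+1) = x ^ a * (1-x)^b - x ^ (a+1) * (1-x)^b := by
    intro x; ring
  have c1 : IntervalIntegrable (fun x : ℝ => x ^ a * (1-x)^b) volume 0 1 := by
    apply Continuous.intervalIntegrable; continuity
  have c2 : IntervalIntegrable (fun x : ℝ => x ^ (a+1) * (1-x)^b) volume 0 1 := by
    apply Continuous.intervalIntegrable; continuity
  simp only [PI]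
  rw [intervalIntegral.integral_congr (g := fun x : ℝ => x ^ a * (1-x)^b - x ^ (a+1) * (1-x)^b)
    (fun x _ => h1 x)]
  exact intervalIntegral.integral_sub c1 c2

lemma PF_step (a b : ℕ) : PF a b - PF (a+1) b = PF a (b+1) := by
  have e1 : (a+1)+b+1 = (a+b+1)+1 := by ring
  have e2 : a+(b+1)+1 = (a+b+1)+1 := by ring
  rw [PF, PF, PF, e1, e2, Nat.factorial_succ (a+b+1), Nat.factorial_succ a, Nat.factorial_succ b]
  push_cast
  have h1 : (Nat.factorial a : ℝ) ≠ 0 := by positivity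
  have h2 : (Nat.factorial b : ℝ) ≠ 0 := by positivity
  have h3 : (Nat.factorial (a+b+1) : ℝ) ≠ 0 := by positivity
  have h4 : ((a:ℝ)+(b:ℝ)+1+1) ≠ 0 := by positivity
  field_simp
  ring

lemma PI_eq (b a : ℕ) : PI a b = PF a b := by
  induction b generalizing a with
  | zero => exact PI_zero a
  | succ b ih => rw [PI_succ, ih, ih, PF_step]

/- ## The summand -/

noncomputable def ak (k : ℕ) : ℝ :=
  (4 : ℝ) ^ (k + 1) / ((k + 1 : ℝ) ^ 2 * (Nat.choose (2 * (k + 1)) (k + 1) : ℝ))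

lemma ak_eq (k : ℕ) : ak k = 2 / ((k:ℝ)+1) * CF k 0 := by
  have hsub : 2*(k+1) - (k+1) = k+1 := by omega
  have hchn : Nat.choose (2*(k+1)) (k+1) * Nat.factorial (k+1) * Nat.factorial (k+1)
      = Nat.factorial (2*(k+1)) := by
    have h := Nat.choose_mul_factorial_mul_factorial (show k+1 ≤ 2*(k+1) by omega)
    rw [hsub] at h
    exact h
  have hch : (Nat.choose (2*(k+1)) (k+1) : ℝ)
      = (Nat.factorial (2*(k+1)) : ℝ) / ((Nat.factorial (k+1)) * (Nat.factorial (k+1))) := by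
    have hf1 : ((Nat.factorial (k+1) : ℝ) * (Nat.factorial (k+1))) ≠ 0 := by positivity
    rw [eq_div_iff hf1, ← mul_assoc]
    exact_mod_cast congrArg (Nat.cast (R := ℝ)) hchn
  have e1 : 2*0+2*k+2 = 2*(k+1) := by ring
  have e2 : 0+k+1 = k+1 := by ring
  rw [ak, CF, e1, e2, hch]
  have hf1 : (Nat.factorial (k+1) : ℝ) ≠ 0 := by positivity
  have hf2 : (Nat.factorial (2*(k+1)) : ℝ) ≠ 0 := by positivity
  have hk1 : ((k:ℝ)+1) ≠ 0 := by positivity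
  rw [Nat.factorial_succ k, Nat.factorial_zero]
  have hf0 : (Nat.factorial k : ℝ) ≠ 0 := by positivity
  push_cast
  field_simp
  ring


lemma integral_term (k : ℕ) :
    ∫ x in Set.Ioo (0:ℝ) 1, 2 * (1-x^2)^k / ((k:ℝ)+1) = ak k := by
  have h1 : ∫ x in Set.Ioo (0:ℝ) 1, 2*(1-x^2)^k/((k:ℝ)+1)
      = 2/((k:ℝ)+1) * ∫ x in Set.Ioo (0:ℝ) 1, (1-x^2)^k := by
    rw [show (fun x : ℝ => 2*(1-x^2)^k/((k:ℝ)+1))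
        = fun x : ℝ => (2/((k:ℝ)+1)) • ((1-x^2)^k) from funext fun x => by
      rw [smul_eq_mul]; ring, integral_smul, smul_eq_mul]
  have h2 : (∫ x in Set.Ioo (0:ℝ) 1, (1-x^2)^k) = G k 0 := by
    rw [G]
    simp only [Nat.mul_zero, pow_zero, one_mul]
    rw [intervalIntegral.integral_of_le zero_le_one, integral_Ioc_eq_integral_Ioo]
  rw [h1, h2, G_eq, ak_eq]

lemma lint_term (k : ℕ) :
    (∫⁻ x in Set.Ioo (0:ℝ) 1, ENNReal.ofReal (2*(1-x^2)^k/((k:ℝ)+1)))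
      = ENNReal.ofReal (ak k) := by
  rw [← integral_term k, ← ofReal_integral_eq_lintegral_ofReal]
  · have hc : Continuous (fun x : ℝ => 2*(1-x^2)^k/((k:ℝ)+1)) := by continuity
    exact (hc.integrableOn_Icc (a := 0) (b := 1)).mono_set Set.Ioo_subset_Icc_self
  · refine (ae_restrict_iff' measurableSet_Ioo).2 (Filter.Eventually.of_forall fun x hx => ?_)
    have h : (0:ℝ) ≤ 1 - x^2 := by nlinarith [hx.1, hx.2]
    positivity

lemma pointwise_left {x : ℝ} (hx : x ∈ Set.Ioo (0:ℝ) 1) :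
    ∑' k : ℕ, ENNReal.ofReal (2*(1-x^2)^k/((k:ℝ)+1))
      = ENNReal.ofReal ((-4) * Real.log x / (1-x^2)) := by
  obtain ⟨hx0, hx1⟩ := hx
  have hx2 : 0 < 1 - x^2 := by nlinarith
  have habs : |1 - x^2| < 1 := by rw [abs_of_pos hx2]; nlinarith
  have hs := (hasSum_pow_div_log_of_abs_lt_one habs).mul_left (2/(1-x^2))
  have heq : (fun n : ℕ => 2/(1-x^2) * ((1-x^2)^(n+1)/((n:ℝ)+1)))
      = fun k : ℕ => 2*(1-x^2)^k/((k:ℝ)+1) := by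
    funext n
    have hn : ((n:ℝ)+1) ≠ 0 := by positivity
    rw [div_mul_div_comm, pow_succ (1-x^2) n,
      show 2*((1-x^2)^n*(1-x^2)) = (1-x^2)*(2*(1-x^2)^n) from by ring,
      mul_div_mul_left _ _ hx2.ne']
  have hval : 2/(1-x^2) * -Real.log (1-(1-x^2)) = (-4) * Real.log x / (1-x^2) := by
    rw [show (1:ℝ)-(1-x^2) = x^2 by ring, Real.log_pow]
    push_cast
    ring
  rw [heq, hval] at hs
  rw [← hs.tsum_eq, ← ENNReal.ofReal_tsum_of_nonneg (fun k => by positivity) hs.summable]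

lemma pointwise_right {x : ℝ} (hx : x ∈ Set.Ioo (0:ℝ) 1) :
    ENNReal.ofReal ((-4) * Real.log x / (1-x^2))
      = ∑' p : ℕ × ℕ, ENNReal.ofReal (4 * x^(2*p.1) * (1-x)^(p.2+1) / ((p.2:ℝ)+1)) := by
  obtain ⟨hx0, hx1⟩ := hx
  have hx2 : 0 < 1 - x^2 := by nlinarith
  have hgeo : HasSum (fun n : ℕ => x^(2*n)) (1/(1-x^2)) := by
    have h := hasSum_geometric_of_lt_one (sq_nonneg x) (by nlinarith : x^2 < 1)
    have : (fun n : ℕ => (x^2)^n) = fun n : ℕ => x^(2*n) := by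
      funext n; rw [← pow_mul]
    rwa [this, ← one_div] at h
  have hlog : HasSum (fun m : ℕ => 4*(1-x)^(m+1)/((m:ℝ)+1)) (4 * (-Real.log x)) := by
    have habs : |1 - x| < 1 := by rw [abs_of_pos (by linarith)]; linarith
    have h := (hasSum_pow_div_log_of_abs_lt_one habs).mul_left 4
    have heq : (fun n : ℕ => 4 * ((1-x)^(n+1)/((n:ℝ)+1)))
        = fun m : ℕ => 4*(1-x)^(m+1)/((m:ℝ)+1) := by
      funext n; rw [mul_div_assoc]
    rwa [heq, show (1:ℝ)-(1-x) = x by ring] at h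
  have hlogx : 0 ≤ -Real.log x := by
    rw [neg_nonneg]
    exact Real.log_nonpos (le_of_lt hx0) (le_of_lt hx1)
  rw [ENNReal.tsum_prod']
  dsimp only
  have hinner : ∀ n : ℕ, ∑' m : ℕ, ENNReal.ofReal (4 * x^(2*n) * (1-x)^(m+1) / ((m:ℝ)+1))
      = ENNReal.ofReal (x^(2*n)) * ENNReal.ofReal (4 * (-Real.log x)) := by
    intro n
    have h1 : ∀ m : ℕ, (4 * x^(2*n) * (1-x)^(m+1) / ((m:ℝ)+1))
        = x^(2*n) * (4*(1-x)^(m+1)/((m:ℝ)+1)) := fun m => by ring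
    simp only [h1]
    have h2 : ∀ m : ℕ, ENNReal.ofReal (x^(2*n) * (4*(1-x)^(m+1)/((m:ℝ)+1)))
        = ENNReal.ofReal (x^(2*n)) * ENNReal.ofReal (4*(1-x)^(m+1)/((m:ℝ)+1)) := by
      intro m; rw [ENNReal.ofReal_mul (by positivity)]
    simp only [h2]
    rw [ENNReal.tsum_mul_left]
    congr 1
    rw [← hlog.tsum_eq, ← ENNReal.ofReal_tsum_of_nonneg (fun m => by
      have : (0:ℝ) ≤ 1 - x := by linarith
      positivity) hlog.summable]
  simp only [hinner]
  rw [ENNReal.tsum_mul_right, ← ENNReal.ofReal_tsum_of_nonneg (fun n => by positivity)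
    hgeo.summable, hgeo.tsum_eq, ← ENNReal.ofReal_mul (by positivity)]
  congr 1
  rw [div_eq_mul_inv, one_div, mul_comm]
  ring


/-- telescoping auxiliary -/
noncomputable def tt (n m : ℕ) : ℝ :=
  (Nat.factorial (2*n) * Nat.factorial m : ℝ) / ((2*(n:ℝ)+1) * (Nat.factorial (2*n+1+m)))

lemma tt_zero (n : ℕ) : tt n 0 = 1/(2*(n:ℝ)+1)^2 := by
  rw [tt, Nat.factorial_zero, show 2*n+1+0 = (2*n)+1 from by ring, Nat.factorial_succ (2*n)]
  have h1 : (Nat.factorial (2*n) : ℝ) ≠ 0 := by positivity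
  have h2 : (2*(n:ℝ)+1) ≠ 0 := by positivity
  push_cast
  field_simp

lemma tt_step (n m : ℕ) :
    4 * (Nat.factorial (2*n)) * (Nat.factorial m) / (Nat.factorial (2*n+m+2))
      = 4 * (tt n m - tt n (m+1)) := by
  rw [tt, tt, show 2*n+1+(m+1) = (2*n+1+m)+1 from by ring,
    show 2*n+m+2 = (2*n+1+m)+1 from by ring, Nat.factorial_succ (2*n+1+m),
    Nat.factorial_succ m]
  have h1 : (Nat.factorial (2*n) : ℝ) ≠ 0 := by positivity
  have h2 : (Nat.factorial m : ℝ) ≠ 0 := by positivity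
  have h3 : (Nat.factorial (2*n+1+m) : ℝ) ≠ 0 := by positivity
  have h4 : (2*(n:ℝ)+1) ≠ 0 := by positivity
  have h5 : (2*(n:ℝ)+1+(m:ℝ)+1) ≠ 0 := by positivity
  push_cast
  field_simp
  ring

lemma tt_nonneg (n m : ℕ) : 0 ≤ tt n m := by
  rw [tt]; positivity

lemma tt_tendsto (n : ℕ) : Filter.Tendsto (tt n) Filter.atTop (nhds 0) := by
  have hb : ∀ m : ℕ, tt n m ≤ (Nat.factorial (2*n) : ℝ) * (1/((m:ℝ)+1)) := by
    intro m
    rw [tt]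
    have hfle : ((m+1) * Nat.factorial m : ℕ) ≤ Nat.factorial (2*n+1+m) := by
      rw [← Nat.factorial_succ]
      exact Nat.factorial_le (by omega)
    have hfle' : ((m:ℝ)+1) * (Nat.factorial m) ≤ (Nat.factorial (2*n+1+m) : ℝ) := by
      exact_mod_cast hfle
    have h3 : (0:ℝ) < ((m:ℝ)+1) * (Nat.factorial m) := by positivity
    have h5 : (0:ℝ) < (2*(n:ℝ)+1) := by positivity
    have h6 : (0:ℝ) < (Nat.factorial (2*n+1+m) : ℝ) := by positivity
    rw [div_le_iff₀ (by positivity)]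
    have key : (Nat.factorial (2*n) : ℝ) * (Nat.factorial m)
        ≤ (Nat.factorial (2*n) : ℝ) * (Nat.factorial (2*n+1+m)) / ((m:ℝ)+1) := by
      rw [le_div_iff₀ (by positivity)]
      calc (Nat.factorial (2*n) : ℝ) * (Nat.factorial m) * ((m:ℝ)+1)
          = (Nat.factorial (2*n) : ℝ) * (((m:ℝ)+1) * (Nat.factorial m)) := by ring
        _ ≤ (Nat.factorial (2*n) : ℝ) * (Nat.factorial (2*n+1+m)) := by
            apply mul_le_mul_of_nonneg_left hfle' (by positivity)
    calc (Nat.factorial (2*n) : ℝ) * (Nat.factorial m)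
        ≤ (Nat.factorial (2*n) : ℝ) * (Nat.factorial (2*n+1+m)) / ((m:ℝ)+1) := key
      _ ≤ (Nat.factorial (2*n) : ℝ) * (1/((m:ℝ)+1)) * ((2*(n:ℝ)+1) * (Nat.factorial (2*n+1+m))) := by
          rw [div_le_iff₀ (by positivity)]
          have : (1:ℝ) ≤ (2*(n:ℝ)+1) := by
            have : (0:ℝ) ≤ (n:ℝ) := Nat.cast_nonneg n
            linarith
          have h7 : (0:ℝ) ≤ (Nat.factorial (2*n) : ℝ) * (Nat.factorial (2*n+1+m)) := by positivity
          calc (Nat.factorial (2*n) : ℝ) * (Nat.factorial (2*n+1+m))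
              ≤ (2*(n:ℝ)+1) * ((Nat.factorial (2*n)) * (Nat.factorial (2*n+1+m))) := by
                nlinarith
            _ = (Nat.factorial (2*n) : ℝ) * (1/((m:ℝ)+1)) * ((2*(n:ℝ)+1) * (Nat.factorial (2*n+1+m))) * ((m:ℝ)+1) := by
                field_simp
  have hto : Filter.Tendsto (fun m : ℕ => (Nat.factorial (2*n) : ℝ) * (1/((m:ℝ)+1)))
      Filter.atTop (nhds 0) := by
    have := tendsto_one_div_add_atTop_nhds_zero_nat.const_mul (Nat.factorial (2*n) : ℝ)
    simpa using this
  exact squeeze_zero (tt_nonneg n) hb hto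

lemma telescope_hasSum (n : ℕ) :
    HasSum (fun m : ℕ => 4 * (Nat.factorial (2*n)) * (Nat.factorial m)
      / (Nat.factorial (2*n+m+2)) : ℕ → ℝ) (4 / (2*(n:ℝ)+1)^2) := by
  rw [hasSum_iff_tendsto_nat_of_nonneg (fun m => by positivity)]
  have hps : ∀ M : ℕ, ∑ m ∈ Finset.range M, (4 * (Nat.factorial (2*n)) * (Nat.factorial m)
      / (Nat.factorial (2*n+m+2)) : ℝ) = 4 * tt n 0 - 4 * tt n M := by
    intro M
    have : ∀ m, (4 * (Nat.factorial (2*n)) * (Nat.factorial m)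
        / (Nat.factorial (2*n+m+2)) : ℝ) = 4 * tt n m - 4 * tt n (m+1) := by
      intro m; rw [tt_step]; ring
    simp only [this]
    exact Finset.sum_range_sub' (fun m => 4 * tt n m) M
  simp only [hps]
  have h2 := ((tt_tendsto n).const_mul (4:ℝ)).const_sub (4 * tt n 0)
  simp only [mul_zero, sub_zero] at h2
  convert h2 using 2
  rw [tt_zero]
  ring


lemma lint_term2 (n m : ℕ) :
    (∫⁻ x in Set.Ioo (0:ℝ) 1, ENNReal.ofReal (4 * x^(2*n) * (1-x)^(m+1) / ((m:ℝ)+1)))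
      = ENNReal.ofReal (4 * (Nat.factorial (2*n)) * (Nat.factorial m)
          / (Nat.factorial (2*n+m+2))) := by
  have hint : ∫ x in Set.Ioo (0:ℝ) 1, 4 * x^(2*n) * (1-x)^(m+1) / ((m:ℝ)+1)
      = 4 * (Nat.factorial (2*n)) * (Nat.factorial m) / (Nat.factorial (2*n+m+2)) := by
    have h1 : ∫ x in Set.Ioo (0:ℝ) 1, 4 * x^(2*n) * (1-x)^(m+1) / ((m:ℝ)+1)
        = (4/((m:ℝ)+1)) * PI (2*n) (m+1) := by
      rw [PI, intervalIntegral.integral_of_le zero_le_one, integral_Ioc_eq_integral_Ioo,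
        show (fun x : ℝ => 4 * x^(2*n) * (1-x)^(m+1) / ((m:ℝ)+1))
          = fun x : ℝ => (4/((m:ℝ)+1)) • (x^(2*n) * (1-x)^(m+1)) from funext fun x => by
            rw [smul_eq_mul]; ring, integral_smul, smul_eq_mul]
    rw [h1, PI_eq, PF, show 2*n+(m+1)+1 = 2*n+m+2 from by ring, Nat.factorial_succ m]
    have h2 : ((m:ℝ)+1) ≠ 0 := by positivity
    have h3 : (Nat.factorial (2*n+m+2) : ℝ) ≠ 0 := by positivity
    push_cast
    field_simp
  rw [← hint, ← ofReal_integral_eq_lintegral_ofReal]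
  · have hc : Continuous (fun x : ℝ => 4 * x^(2*n) * (1-x)^(m+1) / ((m:ℝ)+1)) := by continuity
    exact (hc.integrableOn_Icc (a := 0) (b := 1)).mono_set Set.Ioo_subset_Icc_self
  · refine (ae_restrict_iff' measurableSet_Ioo).2 (Filter.Eventually.of_forall fun x hx => ?_)
    have h0 : (0:ℝ) ≤ x := le_of_lt hx.1
    have h1 : (0:ℝ) ≤ 1 - x := by linarith [hx.2]
    have h2 : (0:ℝ) < (m:ℝ)+1 := by positivity
    exact div_nonneg (mul_nonneg (mul_nonneg (by norm_num) (pow_nonneg h0 _))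
      (pow_nonneg h1 _)) (le_of_lt h2)

lemma odd_zeta : HasSum (fun n : ℕ => 4 / (2*(n:ℝ)+1)^2) (π^2/2) := by
  set f : ℕ → ℝ := fun n : ℕ => 1/(n:ℝ)^2 with hf
  have h : HasSum f (π^2/6) := hasSum_zeta_two
  have heven : HasSum (fun k : ℕ => f (2*k)) (π^2/24) := by
    have h2 := h.mul_left (1/4)
    have he : (fun k : ℕ => (1/4) * f k) = fun k : ℕ => f (2*k) := by
      funext k
      simp only [hf]
      push_cast
      rw [mul_pow, div_mul_div_comm, one_mul]
      norm_num
    rw [he] at h2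
    convert h2 using 1
    · rfl
    ring
  have hinj : Function.Injective (fun k : ℕ => 2*k+1) := fun a b hab => by
    simpa using hab
  have hodds : Summable (fun k : ℕ => f (2*k+1)) :=
    h.summable.comp_injective (i := fun k : ℕ => 2*k+1) hinj
  have htotal : HasSum f (π^2/24 + ∑' k : ℕ, f (2*k+1)) :=
    HasSum.even_add_odd heven hodds.hasSum
  have hS : ∑' k : ℕ, f (2*k+1) = π^2/8 := by
    have := h.unique htotal
    linarith
  have hodd : HasSum (fun k : ℕ => f (2*k+1)) (π^2/8) := hS ▸ hodds.hasSum
  have h4 := hodd.mul_left 4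
  have he2 : (fun k : ℕ => 4 * f (2*k+1)) = fun n : ℕ => 4/(2*(n:ℝ)+1)^2 := by
    funext k
    simp only [hf]
    push_cast
    rw [mul_one_div]
  rw [he2] at h4
  convert h4 using 1
  · rfl
  ring

lemma zetaVal_two : (∑' n : ℕ, 1 / ((n:ℝ) + 1) ^ 2) = π^2/6 := by
  have h := hasSum_zeta_two
  have h0 := h.tsum_eq
  rw [Summable.tsum_eq_zero_add h.summable] at h0
  simp only [Nat.cast_zero] at h0
  norm_num at h0
  rw [← h0]
  apply tsum_congr
  intro n
  push_cast
  norm_num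


lemma big_sum : ∑' k : ℕ, ENNReal.ofReal (ak k) = ENNReal.ofReal (π^2/2) := by
  have m1 : ∀ k : ℕ, AEMeasurable (fun x : ℝ => ENNReal.ofReal (2*(1-x^2)^k/((k:ℝ)+1)))
      (volume.restrict (Set.Ioo (0:ℝ) 1)) := by
    intro k
    exact ((Continuous.measurable (by continuity)).ennreal_ofReal).aemeasurable
  have m2 : ∀ p : ℕ × ℕ, AEMeasurable
      (fun x : ℝ => ENNReal.ofReal (4 * x^(2*p.1) * (1-x)^(p.2+1) / ((p.2:ℝ)+1)))
      (volume.restrict (Set.Ioo (0:ℝ) 1)) := by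
    intro p
    exact ((Continuous.measurable (by continuity)).ennreal_ofReal).aemeasurable
  calc ∑' k : ℕ, ENNReal.ofReal (ak k)
      = ∑' k : ℕ, ∫⁻ x in Set.Ioo (0:ℝ) 1, ENNReal.ofReal (2*(1-x^2)^k/((k:ℝ)+1)) := by
        exact tsum_congr fun k => (lint_term k).symm
    _ = ∫⁻ x in Set.Ioo (0:ℝ) 1, ∑' k : ℕ, ENNReal.ofReal (2*(1-x^2)^k/((k:ℝ)+1)) :=
        (lintegral_tsum m1).symm
    _ = ∫⁻ x in Set.Ioo (0:ℝ) 1,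
          ∑' p : ℕ × ℕ, ENNReal.ofReal (4 * x^(2*p.1) * (1-x)^(p.2+1) / ((p.2:ℝ)+1)) := by
        refine setLIntegral_congr_fun measurableSet_Ioo (fun x hx => ?_)
        rw [pointwise_left hx, pointwise_right hx]
    _ = ∑' p : ℕ × ℕ, ∫⁻ x in Set.Ioo (0:ℝ) 1,
          ENNReal.ofReal (4 * x^(2*p.1) * (1-x)^(p.2+1) / ((p.2:ℝ)+1)) := lintegral_tsum m2
    _ = ∑' p : ℕ × ℕ, ENNReal.ofReal (4 * (Nat.factorial (2*p.1)) * (Nat.factorial p.2)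
          / (Nat.factorial (2*p.1+p.2+2))) := tsum_congr fun p => lint_term2 p.1 p.2
    _ = ∑' n : ℕ, ∑' m : ℕ, ENNReal.ofReal (4 * (Nat.factorial (2*n)) * (Nat.factorial m)
          / (Nat.factorial (2*n+m+2))) := ENNReal.tsum_prod'
    _ = ∑' n : ℕ, ENNReal.ofReal (4 / (2*(n:ℝ)+1)^2) := by
        refine tsum_congr fun n => ?_
        rw [← ENNReal.ofReal_tsum_of_nonneg (fun m => by positivity)
          (telescope_hasSum n).summable, (telescope_hasSum n).tsum_eq]
    _ = ENNReal.ofReal (π^2/2) := by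
        rw [← ENNReal.ofReal_tsum_of_nonneg (fun n => by positivity) odd_zeta.summable,
          odd_zeta.tsum_eq]

theorem stmt_15 :
    ∑' k : ℕ, (4 : ℝ) ^ (k + 1) /
      ((k + 1 : ℝ) ^ 2 * (Nat.choose (2 * (k + 1)) (k + 1) : ℝ))
    = 3 * zetaVal 2 := by
  have hz : zetaVal 2 = π^2/6 := by
    rw [zetaVal]
    exact_mod_cast zetaVal_two
  have hnn : ∀ k : ℕ, 0 ≤ ak k := by
    intro k
    rw [ak]
    positivity
  have h1 : ∑' k : ℕ, (4 : ℝ) ^ (k + 1) /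
      ((k + 1 : ℝ) ^ 2 * (Nat.choose (2 * (k + 1)) (k + 1) : ℝ)) = ∑' k : ℕ, ak k := rfl
  have h2 : ∑' k : ℕ, ak k = π^2/2 := by
    have h3 : ∀ k : ℕ, ak k = (ENNReal.ofReal (ak k)).toReal :=
      fun k => (ENNReal.toReal_ofReal (hnn k)).symm
    calc ∑' k : ℕ, ak k = ∑' k : ℕ, (ENNReal.ofReal (ak k)).toReal := tsum_congr h3
      _ = (∑' k : ℕ, ENNReal.ofReal (ak k)).toReal :=
          (ENNReal.tsum_toReal_eq fun k => ENNReal.ofReal_ne_top).symm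
      _ = (ENNReal.ofReal (π^2/2)).toReal := by rw [big_sum]
      _ = π^2/2 := ENNReal.toReal_ofReal (by positivity)
  rw [h1, h2, hz]
  ring
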